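/- arXiv:1811.08247 — 4 statements merged into one kernel-verified Lean document; each statement's English description precedes it below -/
import Mathlib

section
/- Let Ω ⊂ ℝ³ be open, bounded, connected with Lipschitz boundary, let n ∈ ℝ³ be a unit vector, and let h ∈ C([0,T]) be non-decreasing with h(0) = inf_{x∈Ω} x·n and h(T) = sup_{x∈Ω} x·n. For t ∈ [0,T] set Ω_M(t) := Ω ∩ {x : x·n < h(t)} and Ω_A(t) := Ω ∩ {x : x·n > h(t)}. Let z ∈ W^{1,∞}(Ω;ℝ³) be such that for a.e. t ∈ (0,T) there exists Z_t ∈ W^{1,∞}(Ω;ℝ³) with ∇Z_t = ∇z a.e. in Ω_M(t) and ∇Z_t = 0 a.e. in Ω_A(t). If moreover the set Ω ∩ {x : x·n = h(t)} is connected for every t ∈ (0,T), then there exists a Lipschitz function f : ℝ → ℝ³ such that z(x) = f(x·n) for all x ∈ Ω. -/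
open MeasureTheory Set
open scoped NNReal ENNReal

noncomputable section

/-- ℝ³ with its Euclidean structure. -/
abbrev E3 : Type := EuclideanSpace ℝ (Fin 3)

/-- 3×3 real matrices. -/
abbrev Mat3 : Type := Matrix (Fin 3) (Fin 3) ℝ

/-- Euclidean dot product on ℝ³. -/
def dot3 (x y : E3) : ℝ := ∑ i, x i * y i

/-- The rank-one matrix `a ⊗ n`, with entries `a i * n j`. -/
def tens (a n : E3) : Mat3 := Matrix.of fun i j => a i * n j

/-- A 3×3 matrix viewed as a continuous linear map ℝ³ → ℝ³. -/
def matCLM (M : Mat3) : E3 →L[ℝ] E3 := Matrix.toEuclideanCLM (𝕜 := ℝ) M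

/-- A matrix acting on a vector of ℝ³. -/
def mulV (M : Mat3) (x : E3) : E3 := matCLM M x

/-- Membership in SO(3). -/
def IsSO3 (Q : Mat3) : Prop := Q.transpose * Q = 1 ∧ Q.det = 1

/-- Ω has Lipschitz boundary: near every boundary point, after a rotation, Ω is the
subgraph of a Lipschitz function. -/
def HasLipschitzBoundary (Ω : Set E3) : Prop :=
  ∀ x ∈ frontier Ω, ∃ (Q : Mat3) (K : ℝ≥0) (ψ : ℝ × ℝ → ℝ) (U : Set E3),
    IsSO3 Q ∧ LipschitzWith K ψ ∧ IsOpen U ∧ x ∈ U ∧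
    Ω ∩ U = {y : E3 | y ∈ U ∧ mulV Q y 2 < ψ (mulV Q y 0, mulV Q y 1)}

/-!
Fix two points `x, y ∈ Ω` on the same slice `{⟪·, n⟫ = s}` and a small `δ > 0`. Since the
admissible times have full measure and `h` is continuous, there is an admissible `t` with
`s < h t < s + δ`. A Lipschitz function whose gradient vanishes a.e. on an open set is locally
constant there, so `Z_t - z` is constant on the (connected) slice at level `s` and `Z_t` is
constant on the slice at level `s + δ`. Moreover `‖∇Z_t‖ ≤ Lip z` a.e. (the interface is a null
hyperplane), so `Z_t` moves by at most `δ · Lip z` along the segments from `x` and `y` to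
`x + δ n` and `y + δ n`. Hence `‖z x - z y‖ ≤ 2 δ Lip z`, and `z` is constant on slices.
Writing `z = f ∘ ⟪·, n⟫`, the map `f` is locally `Lip z`-Lipschitz on the set of levels of `Ω`,
which is the interval `(h 0, h T)` because every slice `{⟪·, n⟫ = h t}` is connected, hence
nonempty; so `f` is Lipschitz there, and it extends to `ℝ`.
-/

open Filter Topology Metric
open scoped InnerProductSpace

theorem ContinuousOn.exists_mem_preimage_of_ae_restrict {X Y : Type*} [TopologicalSpace X]
    [MeasurableSpace X] [OpensMeasurableSpace X] {μ : Measure X} [μ.IsOpenPosMeasure]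
    [TopologicalSpace Y] {h : X → Y} {U : Set X} {V : Set Y} {P : X → Prop}
    (hh : ContinuousOn h U) (hU : IsOpen U) (hV : IsOpen V) (hP : ∀ᵐ t ∂μ.restrict U, P t)
    (hne : (U ∩ h ⁻¹' V).Nonempty) : ∃ t ∈ U, h t ∈ V ∧ P t := by
  obtain ⟨t, ⟨htU, htV⟩, htP⟩ :=
    (Measure.dense_of_ae ((ae_restrict_iff' hU.measurableSet).1 hP)).inter_open_nonempty _
      (hh.isOpen_inter_preimage hU hV) hne
  exact ⟨t, htU, htV, htP htU⟩

theorem exists_mem_Ioo_of_ae_restrict {h : ℝ → ℝ} {T a b : ℝ} {P : ℝ → Prop} (hT : 0 ≤ T)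
    (hh : ContinuousOn h (Icc 0 T)) (hP : ∀ᵐ t ∂volume.restrict (Ioo 0 T), P (h t))
    (hab : a < b) (ha : h 0 ≤ a) (haT : a < h T) : ∃ c ∈ Ioo a b, P c := by
  obtain ⟨c₀, hac₀, hc₀⟩ := exists_between (lt_min hab haT)
  obtain ⟨t₀, ht₀, hc₀t⟩ :=
    intermediate_value_Ioo hT hh ⟨ha.trans_lt hac₀, hc₀.trans_le (min_le_right _ _)⟩
  obtain ⟨t, -, hts, htP⟩ := (hh.mono Ioo_subset_Icc_self).exists_mem_preimage_of_ae_restrict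
    isOpen_Ioo isOpen_Ioo hP
    ⟨t₀, ht₀, show h t₀ ∈ Ioo a b by rw [hc₀t]; exact ⟨hac₀, hc₀.trans_le (min_le_left _ _)⟩⟩
  exact ⟨h t, hts, htP⟩

variable {F : Type*} [NormedAddCommGroup F]

theorem lipschitzOnWith_of_locally_lipschitzOnWith {f : ℝ → F} {s : Set ℝ} {K : ℝ≥0}
    (hs : s.OrdConnected) (hf : ∀ x ∈ s, ∃ U ∈ 𝓝 x, LipschitzOnWith K f U) :
    LipschitzOnWith K f s := by
  have key : ∀ a ∈ s, ∀ b ∈ s, a ≤ b → ‖f b - f a‖ ≤ K * (b - a) := by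
    intro a ha b hb hab
    have hIcc : Icc a b ⊆ s := hs.out ha hb
    have hcont : ContinuousOn f (Icc a b) := fun x hx => by
      obtain ⟨U, hU, hfU⟩ := hf x (hIcc hx)
      exact (hfU.continuousOn.continuousAt hU).continuousWithinAt
    refine image_le_of_liminf_slope_right_le_deriv_boundary (f := fun t => ‖f t - f a‖)
      (B := fun t => K * (t - a)) (B' := fun _ => K) (hcont.sub continuousOn_const).norm
      (by simp) (by fun_prop) (fun x _ => ?_) (fun x hx r hr => ?_) (right_mem_Icc.2 hab)
    · simpa using (((hasDerivAt_id x).sub_const a).const_mul (K : ℝ)).hasDerivWithinAt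
    · obtain ⟨U, hU, hfU⟩ := hf x (hIcc (Ico_subset_Icc_self hx))
      refine Eventually.frequently ?_
      filter_upwards [nhdsWithin_le_nhds hU, self_mem_nhdsWithin] with t htU hxt
      have hxt' : 0 < t - x := sub_pos.2 hxt
      rw [slope_def_field, div_lt_iff₀ hxt']
      calc ‖f t - f a‖ - ‖f x - f a‖ ≤ ‖f t - f x‖ := by
            simpa using norm_sub_norm_le (f t - f a) (f x - f a)
        _ ≤ K * ‖t - x‖ := hfU.norm_sub_le htU (mem_of_mem_nhds hU)
        _ < r * (t - x) := by
          rw [Real.norm_of_nonneg hxt'.le]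
          exact mul_lt_mul_of_pos_right hr hxt'
  rw [lipschitzOnWith_iff_norm_sub_le]
  intro x hx y hy
  rcases le_total x y with hxy | hyx
  · rw [norm_sub_rev, norm_sub_rev x, Real.norm_of_nonneg (sub_nonneg.2 hxy)]
    exact key x hx y hy hxy
  · rw [Real.norm_of_nonneg (sub_nonneg.2 hyx)]
    exact key y hy x hx hyx

variable [NormedSpace ℝ F]

theorem norm_sub_le_of_ae_hasDerivAt {f f' : ℝ → F} {a b K : ℝ} {C : ℝ≥0}
    (hf : LipschitzOnWith C f (uIcc a b)) (hf' : ∀ᵐ t, t ∈ uIoc a b → HasDerivAt f (f' t) t)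
    (bound : ∀ᵐ t, t ∈ uIoc a b → ‖f' t‖ ≤ K) : ‖f b - f a‖ ≤ K * |b - a| := by
  obtain ⟨ℓ, hℓ, hℓf⟩ := exists_dual_vector'' ℝ (f b - f a)
  have hac : AbsolutelyContinuousOnInterval (ℓ ∘ f) a b :=
    (ℓ.lipschitz.comp_lipschitzOnWith hf).absolutelyContinuousOnInterval
  have hderiv : ∀ᵐ t, t ∈ uIoc a b → ‖deriv (ℓ ∘ f) t‖ ≤ K := by
    filter_upwards [hf', bound] with t hft hbt ht
    rw [(ℓ.hasFDerivAt.comp_hasDerivAt t (hft ht)).deriv]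
    exact (ℓ.le_opNorm _).trans (by nlinarith [norm_nonneg (f' t), norm_nonneg ℓ, hbt ht])
  calc ‖f b - f a‖ = (ℓ ∘ f) b - (ℓ ∘ f) a := by
        rw [Function.comp_apply, Function.comp_apply, ← map_sub, hℓf]; rfl
    _ = ∫ t in a..b, deriv (ℓ ∘ f) t := hac.integral_deriv_eq_sub.symm
    _ ≤ ‖∫ t in a..b, deriv (ℓ ∘ f) t‖ := Real.le_norm_self _
    _ ≤ K * |b - a| := intervalIntegral.norm_integral_le_of_norm_le_const_ae hderiv

theorem norm_sub_le_of_ae_norm_fderiv_le_on_line {E : Type*} [NormedAddCommGroup E]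
    [NormedSpace ℝ E] {f : E → F} {s : Set E} {C K : ℝ≥0} {v u : E}
    (hf : LipschitzOnWith C f s) (hline : ∀ t ∈ Icc (0 : ℝ) 1, v + t • u ∈ s)
    (hK : ∀ᵐ t : ℝ, t ∈ Icc 0 1 →
      DifferentiableAt ℝ f (v + t • u) ∧ ‖fderiv ℝ f (v + t • u)‖ ≤ K) :
    ‖f (v + u) - f v‖ ≤ K * ‖u‖ := by
  obtain ⟨C', hlip⟩ : ∃ C', LipschitzOnWith C' (fun t : ℝ => f (v + t • u)) (uIcc 0 1) :=
    ⟨_, hf.comp ((LipschitzWith.const v).add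
      (ContinuousLinearMap.toSpanSingleton ℝ u).lipschitz).lipschitzOnWith
      fun t ht => hline t (by simpa using ht)⟩
  have hIcc : ∀ t ∈ uIoc (0 : ℝ) 1, t ∈ Icc (0 : ℝ) 1 := fun t ht =>
    Ioc_subset_Icc_self (by simpa using ht)
  have h := norm_sub_le_of_ae_hasDerivAt (f' := fun t => fderiv ℝ f (v + t • u) u)
    (K := K * ‖u‖) hlip ?_ ?_
  · simpa using h
  · filter_upwards [hK] with t ht htI
    have hline' : HasDerivAt (fun t : ℝ => v + t • u) u t := by
      simpa using ((hasDerivAt_id t).smul_const u).const_add v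
    exact (ht (hIcc t htI)).1.hasFDerivAt.comp_hasDerivAt t hline'
  · filter_upwards [hK] with t ht htI
    exact ((fderiv ℝ f _).le_opNorm u).trans
      (mul_le_mul_of_nonneg_right (ht (hIcc t htI)).2 (norm_nonneg u))

section Haar

variable [FiniteDimensional ℝ F] {E : Type*} [NormedAddCommGroup E] [NormedSpace ℝ E]
  [FiniteDimensional ℝ E] [MeasurableSpace E] [BorelSpace E] {μ : Measure E}
  [μ.IsAddHaarMeasure]

theorem LipschitzOnWith.ae_differentiableAt_of_isOpen {f : E → F} {s : Set E} {C : ℝ≥0}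
    (hf : LipschitzOnWith C f s) (hs : IsOpen s) :
    ∀ᵐ x ∂μ.restrict s, DifferentiableAt ℝ f x := by
  filter_upwards [hf.ae_differentiableWithinAt hs.measurableSet, ae_restrict_mem hs.measurableSet]
    with x hx hxs
  exact hx.differentiableAt (hs.mem_nhds hxs)

/-- By Fubini, almost every line parallel to `[p, q]` meets the set where the bound fails in a
null set; the one-dimensional estimate holds along those lines, which accumulate at `[p, q]`. -/
theorem norm_sub_le_of_ae_norm_fderiv_le {f : E → F} {s : Set E} {C K : ℝ≥0} (hs : IsOpen s)
    (hf : LipschitzOnWith C f s) (hK : ∀ᵐ x ∂μ.restrict s, ‖fderiv ℝ f x‖ ≤ K) {p q : E}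
    (hpq : segment ℝ p q ⊆ s) : ‖f q - f p‖ ≤ K * ‖q - p‖ := by
  set u := q - p
  have hgood : ∀ᵐ x ∂μ, x ∈ s → DifferentiableAt ℝ f x ∧ ‖fderiv ℝ f x‖ ≤ K := by
    rw [← ae_restrict_iff' hs.measurableSet]
    filter_upwards [hf.ae_differentiableAt_of_isOpen hs, hK] with x hdiff hbound
    exact ⟨hdiff, hbound⟩
  obtain ⟨G, hGae, hGmeas, hG⟩ := hgood.exists_measurable_mem
  have hlines : ∀ᵐ v ∂μ, ∀ᵐ t : ℝ, v + t • u ∈ G :=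
    (ae_ae_add_linearMap_mem_iff (LinearMap.toSpanSingleton ℝ E u) volume μ hGmeas).2 hGae
  have hcompact : IsCompact (segment ℝ p q) := by
    rw [segment_eq_image']
    exact isCompact_Icc.image (by fun_prop)
  obtain ⟨δ, hδ, hδs⟩ := hcompact.exists_thickening_subset_open hs hpq
  have hline_mem : ∀ v ∈ ball p δ, ∀ t ∈ Icc (0 : ℝ) 1, v + t • u ∈ s := by
    intro v hv t ht
    refine hδs (mem_thickening_iff.2 ⟨p + t • u, ?_, ?_⟩)
    · rw [segment_eq_image']
      exact ⟨t, ht, rfl⟩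
    · rwa [dist_eq_norm, show v + t • u - (p + t • u) = v - p by abel, ← dist_eq_norm]
  have hkey : ∀ v ∈ ball p δ ∩ {v | ∀ᵐ t : ℝ, v + t • u ∈ G},
      ‖f (v + u) - f v‖ ≤ K * ‖u‖ := by
    rintro v ⟨hv, hvG⟩
    refine norm_sub_le_of_ae_norm_fderiv_le_on_line hf (hline_mem v hv) ?_
    filter_upwards [hvG] with t ht htI
    exact hG _ ht (hline_mem v hv t htI)
  have hp : p ∈ closure (ball p δ ∩ {v | ∀ᵐ t : ℝ, v + t • u ∈ G}) :=
    (Measure.dense_of_ae hlines).open_subset_closure_inter isOpen_ball (mem_ball_self hδ)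
  have hcont : ContinuousAt (fun v => ‖f (v + u) - f v‖) p := by
    have hfc : ∀ x ∈ s, ContinuousAt f x := fun x hx =>
      hf.continuousOn.continuousAt (hs.mem_nhds hx)
    refine ((ContinuousAt.comp (g := f) ?_ (continuousAt_id.add continuousAt_const)).sub
      (hfc p (hpq (left_mem_segment ℝ p q)))).norm
    show ContinuousAt f (p + u)
    rw [show p + u = q by simp [u]]
    exact hfc q (hpq (right_mem_segment ℝ p q))
  simpa [u] using hcont.continuousWithinAt.closure_le hp continuousWithinAt_const hkey

theorem IsPreconnected.eq_of_ae_fderiv_eq_zero {f : E → F} {U S : Set E} {C : ℝ≥0}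
    (hS : IsPreconnected S) (hU : IsOpen U) (hSU : S ⊆ U) (hf : LipschitzOnWith C f U)
    (hf0 : ∀ᵐ x ∂μ.restrict U, fderiv ℝ f x = 0) {x y : E} (hx : x ∈ S) (hy : y ∈ S) :
    f x = f y := by
  refine eq_of_germ_isConstant_on (fun p hp => ?_) hS hx hy
  obtain ⟨r, hr, hball⟩ := isOpen_iff.1 hU p (hSU hp)
  refine ⟨f p, eventually_of_mem (ball_mem_nhds p hr) fun q hq => ?_⟩
  have h := norm_sub_le_of_ae_norm_fderiv_le (K := 0) hU hf
    (by filter_upwards [hf0] with x hx; simp [hx])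
    (((convex_ball p r).segment_subset (mem_ball_self hr) hq).trans hball)
  simpa [sub_eq_zero] using h

end Haar

section Planar

variable {E : Type*} [NormedAddCommGroup E] [InnerProductSpace ℝ E] {Ω : Set E} {n : E}
  {z : E → F} {K : ℝ≥0}

theorem inner_add_smul_left_of_norm_eq_one (hn : ‖n‖ = 1) (x : E) (t : ℝ) :
    ⟪x + t • n, n⟫_ℝ = ⟪x, n⟫_ℝ + t := by
  rw [inner_add_left, real_inner_smul_left, real_inner_self_eq_norm_sq, hn]
  ring

theorem add_smul_mem_ball_of_norm_eq_one (hn : ‖n‖ = 1) (x : E) {t ρ : ℝ} (ht : |t| < ρ) :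
    x + t • n ∈ ball x ρ := by
  rwa [mem_ball, dist_self_add_left, norm_smul, hn, mul_one, Real.norm_eq_abs]

theorem inner_mem_Ioo_sInf_sSup (hΩ : IsOpen Ω) (hb : Bornology.IsBounded Ω) (hn : ‖n‖ = 1)
    {x : E} (hx : x ∈ Ω) :
    ⟪x, n⟫_ℝ ∈ Ioo (sInf ((⟪·, n⟫_ℝ) '' Ω)) (sSup ((⟪·, n⟫_ℝ) '' Ω)) := by
  have hbdd : Bornology.IsBounded ((⟪·, n⟫_ℝ) '' Ω) := by
    simpa [real_inner_comm] using (innerSL ℝ n).lipschitz.isBounded_image hb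
  obtain ⟨ρ, hρ, hball⟩ := isOpen_iff.1 hΩ x hx
  have hmem : ∀ t, |t| < ρ → ⟪x, n⟫_ℝ + t ∈ (⟪·, n⟫_ℝ) '' Ω := fun t ht =>
    ⟨x + t • n, hball (add_smul_mem_ball_of_norm_eq_one hn x ht),
      inner_add_smul_left_of_norm_eq_one hn x t⟩
  constructor
  · refine (csInf_le hbdd.bddBelow (hmem (-(ρ / 2)) ?_)).trans_lt (by linarith)
    rw [abs_neg, abs_of_pos (half_pos hρ)]
    linarith
  · refine (lt_csSup_of_lt hbdd.bddAbove (hmem (ρ / 2) ?_)) (by linarith)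
    rw [abs_of_pos (half_pos hρ)]
    linarith

theorem exists_lipschitzWith_eq_comp_inner [FiniteDimensional ℝ F] (hΩ : IsOpen Ω)
    (hn : ‖n‖ = 1) (hz : LipschitzOnWith K z Ω)
    (hconst : ∀ x ∈ Ω, ∀ y ∈ Ω, ⟪x, n⟫_ℝ = ⟪y, n⟫_ℝ → z x = z y)
    (hlevels : ((⟪·, n⟫_ℝ) '' Ω).OrdConnected) :
    ∃ (f : ℝ → F) (Kf : ℝ≥0), LipschitzWith Kf f ∧ ∀ x ∈ Ω, z x = f ⟪x, n⟫_ℝ := by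
  set f : ℝ → F := z ∘ Function.invFunOn (⟪·, n⟫_ℝ) Ω
  have hf : ∀ x ∈ Ω, f ⟪x, n⟫_ℝ = z x := fun x hx =>
    have h := Function.invFunOn_pos (⟨x, hx, rfl⟩ : ∃ y ∈ Ω, ⟪y, n⟫_ℝ = ⟪x, n⟫_ℝ)
    hconst _ h.1 x hx h.2
  have hloc : ∀ s ∈ (⟪·, n⟫_ℝ) '' Ω, ∃ U ∈ 𝓝 s, LipschitzOnWith K f U := by
    rintro _ ⟨x, hx, rfl⟩
    obtain ⟨ρ, hρ, hball⟩ := isOpen_iff.1 hΩ x hx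
    have hshift : ∀ s ∈ ball ⟪x, n⟫_ℝ ρ,
        x + (s - ⟪x, n⟫_ℝ) • n ∈ Ω ∧ f s = z (x + (s - ⟪x, n⟫_ℝ) • n) := by
      intro s hs
      have hmem := hball (add_smul_mem_ball_of_norm_eq_one hn x (t := s - ⟪x, n⟫_ℝ) hs)
      refine ⟨hmem, ?_⟩
      have := hf _ hmem
      rwa [inner_add_smul_left_of_norm_eq_one hn, add_sub_cancel] at this
    refine ⟨ball ⟪x, n⟫_ℝ ρ, ball_mem_nhds _ hρ, lipschitzOnWith_iff_norm_sub_le.2 ?_⟩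
    intro s hs s' hs'
    rw [(hshift s hs).2, (hshift s' hs').2]
    refine (hz.norm_sub_le (hshift s hs).1 (hshift s' hs').1).trans_eq ?_
    rw [add_sub_add_left_eq_sub, ← sub_smul, norm_smul, hn, mul_one, sub_sub_sub_cancel_right]
  obtain ⟨g, hg, hfg⟩ :=
    (lipschitzOnWith_of_locally_lipschitzOnWith hlevels hloc).extend_finite_dimension
  exact ⟨g, _, hg, fun x hx => by rw [← hfg ⟨x, hx, rfl⟩, hf x hx]⟩

variable [MeasurableSpace E]

/-- `Z` plays the role of the paper's `Z_t` for the level `c = h t`. -/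
def IsPlanarTruncation (μ : Measure E) (Ω : Set E) (n : E) (z : E → F) (c : ℝ) (Z : E → F) :
    Prop :=
  (∀ᵐ x ∂(μ.restrict (Ω ∩ {x : E | ⟪x, n⟫_ℝ < c})), fderiv ℝ Z x = fderiv ℝ z x) ∧
    ∀ᵐ x ∂(μ.restrict (Ω ∩ {x : E | c < ⟪x, n⟫_ℝ})), fderiv ℝ Z x = 0

def HasPlanarTruncation (μ : Measure E) (Ω : Set E) (n : E) (z : E → F) (c : ℝ) : Prop :=
  ∃ (Z : E → F) (K' : ℝ≥0), LipschitzOnWith K' Z Ω ∧ IsPlanarTruncation μ Ω n z c Z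

variable [FiniteDimensional ℝ E] [BorelSpace E] {μ : Measure E} [μ.IsAddHaarMeasure]

theorem ae_inner_ne (hn : ‖n‖ = 1) (c : ℝ) : ∀ᵐ x ∂μ, ⟪x, n⟫_ℝ ≠ c := by
  refine ae_mem_of_ae_add_linearMap_mem (LinearMap.toSpanSingleton ℝ E n) volume μ
    (isOpen_ne_fun (by fun_prop) continuous_const).measurableSet fun y => ?_
  filter_upwards [(countable_singleton (c - ⟪y, n⟫_ℝ)).ae_notMem volume] with t ht
  change ⟪y + t • n, n⟫_ℝ ≠ c
  rw [inner_add_smul_left_of_norm_eq_one hn]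
  exact fun h => ht (mem_singleton_iff.2 (by linarith))

theorem IsPlanarTruncation.ae_norm_fderiv_le {Z : E → F} {c : ℝ}
    (hZ : IsPlanarTruncation μ Ω n z c Z) (hΩ : IsOpen Ω) (hn : ‖n‖ = 1)
    (hz : LipschitzOnWith K z Ω) : ∀ᵐ x ∂μ.restrict Ω, ‖fderiv ℝ Z x‖ ≤ K := by
  obtain ⟨hbelow, habove⟩ := hZ
  rw [ae_restrict_iff' (hΩ.inter (isOpen_lt (by fun_prop) continuous_const)).measurableSet]
    at hbelow
  rw [ae_restrict_iff' (hΩ.inter (isOpen_lt continuous_const (by fun_prop))).measurableSet]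
    at habove
  rw [ae_restrict_iff' hΩ.measurableSet]
  filter_upwards [hbelow, habove, ae_inner_ne hn c] with x hxb hxa hxc hx
  rcases hxc.lt_or_gt with hlt | hgt
  · rw [hxb ⟨hx, hlt⟩]
    exact norm_fderiv_le_of_lipschitzOn ℝ (hΩ.mem_nhds hx) hz
  · simp [hxa ⟨hx, hgt⟩]

theorem norm_sub_le_of_hasPlanarTruncation [FiniteDimensional ℝ F] {c δ : ℝ} {x y : E}
    (hΩ : IsOpen Ω) (hn : ‖n‖ = 1) (hz : LipschitzOnWith K z Ω)
    (hc : HasPlanarTruncation μ Ω n z c) (hx : x ∈ Ω) (hy : y ∈ Ω) (hxy : ⟪x, n⟫_ℝ = ⟪y, n⟫_ℝ)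
    (hxc : ⟪x, n⟫_ℝ < c) (hcδ : c < ⟪x, n⟫_ℝ + δ)
    (hsx : segment ℝ x (x + δ • n) ⊆ Ω) (hsy : segment ℝ y (y + δ • n) ⊆ Ω)
    (hS : IsPreconnected (Ω ∩ {p | ⟪p, n⟫_ℝ = ⟪x, n⟫_ℝ}))
    (hS' : IsPreconnected (Ω ∩ {p | ⟪p, n⟫_ℝ = ⟪x, n⟫_ℝ + δ})) :
    ‖z x - z y‖ ≤ 2 * K * δ := by
  obtain ⟨Z, K', hZ, hZc⟩ := hc
  have hδ : 0 < δ := by linarith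
  have hbelow_open : IsOpen (Ω ∩ {p | ⟪p, n⟫_ℝ < c}) :=
    hΩ.inter (isOpen_lt (by fun_prop) continuous_const)
  have habove_open : IsOpen (Ω ∩ {p | c < ⟪p, n⟫_ℝ}) :=
    hΩ.inter (isOpen_lt continuous_const (by fun_prop))
  have hbelow : Z x - z x = Z y - z y := by
    refine hS.eq_of_ae_fderiv_eq_zero (μ := μ) (f := fun p => Z p - z p) hbelow_open
      (by rintro p ⟨hp, hpx : ⟪p, n⟫_ℝ = _⟩; exact ⟨hp, show ⟪p, n⟫_ℝ < c by linarith⟩)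
      ((hZ.sub hz).mono inter_subset_left) ?_ ⟨hx, rfl⟩ ⟨hy, hxy.symm⟩
    filter_upwards [hZc.1, (hZ.mono inter_subset_left).ae_differentiableAt_of_isOpen hbelow_open,
      (hz.mono inter_subset_left).ae_differentiableAt_of_isOpen hbelow_open] with p hp hZp hzp
    rw [fderiv_fun_sub hZp hzp, hp, sub_self]
  have hshift : ∀ p, ⟪p + δ • n, n⟫_ℝ = ⟪p, n⟫_ℝ + δ := fun p =>
    inner_add_smul_left_of_norm_eq_one hn p δ
  have habove : Z (x + δ • n) = Z (y + δ • n) :=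
    hS'.eq_of_ae_fderiv_eq_zero habove_open
      (by rintro p ⟨hp, hpx : ⟪p, n⟫_ℝ = _⟩; exact ⟨hp, show c < ⟪p, n⟫_ℝ by linarith⟩)
      (hZ.mono inter_subset_left) hZc.2 ⟨hsx (right_mem_segment ℝ _ _), hshift x⟩
      ⟨hsy (right_mem_segment ℝ _ _), show ⟪y + δ • n, n⟫_ℝ = _ by rw [hshift, hxy]⟩
  have hstep : ∀ p, segment ℝ p (p + δ • n) ⊆ Ω → ‖Z (p + δ • n) - Z p‖ ≤ K * δ := by
    intro p hp
    simpa [norm_smul, hn, abs_of_pos hδ] using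
      norm_sub_le_of_ae_norm_fderiv_le hΩ hZ (hZc.ae_norm_fderiv_le hΩ hn hz) hp
  calc ‖z x - z y‖ = ‖(Z (y + δ • n) - Z y) - (Z (x + δ • n) - Z x)‖ := by
        rw [habove]
        congr 1
        linear_combination (norm := abel) -hbelow
    _ ≤ K * δ + K * δ := (norm_sub_le _ _).trans (add_le_add (hstep y hsy) (hstep x hsx))
    _ = 2 * K * δ := by ring

theorem eq_of_inner_eq_of_hasPlanarTruncation [FiniteDimensional ℝ F] (hΩ : IsOpen Ω)
    (hn : ‖n‖ = 1) (hz : LipschitzOnWith K z Ω)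
    (htrunc : ∀ x ∈ Ω, ∀ δ > 0, ∃ c ∈ Ioo ⟪x, n⟫_ℝ (⟪x, n⟫_ℝ + δ), HasPlanarTruncation μ Ω n z c)
    (hslice : ∀ x ∈ Ω, IsPreconnected (Ω ∩ {p | ⟪p, n⟫_ℝ = ⟪x, n⟫_ℝ}))
    {x y : E} (hx : x ∈ Ω) (hy : y ∈ Ω) (hxy : ⟪x, n⟫_ℝ = ⟪y, n⟫_ℝ) : z x = z y := by
  obtain ⟨ρx, hρx, hballx⟩ := isOpen_iff.1 hΩ x hx
  obtain ⟨ρy, hρy, hbally⟩ := isOpen_iff.1 hΩ y hy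
  have hseg : ∀ p ρ, ball p ρ ⊆ Ω → ∀ δ ∈ Ioo 0 ρ, segment ℝ p (p + δ • n) ⊆ Ω :=
    fun p ρ hball δ hδ => ((convex_ball p ρ).segment_subset (mem_ball_self (hδ.1.trans hδ.2))
      (add_smul_mem_ball_of_norm_eq_one hn p (by rw [abs_of_pos hδ.1]; exact hδ.2))).trans hball
  have hsmall : ∀ᶠ δ in 𝓝[>] 0, ‖z x - z y‖ ≤ 2 * K * δ := by
    filter_upwards [Ioo_mem_nhdsGT (lt_min hρx hρy)] with δ hδ
    obtain ⟨c, hc, htc⟩ := htrunc x hx δ hδ.1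
    have hsx := hseg x ρx hballx δ ⟨hδ.1, hδ.2.trans_le (min_le_left _ _)⟩
    have hsy := hseg y ρy hbally δ ⟨hδ.1, hδ.2.trans_le (min_le_right _ _)⟩
    refine norm_sub_le_of_hasPlanarTruncation hΩ hn hz htc hx hy hxy hc.1 hc.2 hsx hsy
      (hslice x hx) ?_
    simpa [inner_add_smul_left_of_norm_eq_one hn] using
      hslice _ (hsx (right_mem_segment ℝ _ _))
  have hlim : Tendsto (fun δ : ℝ => 2 * K * δ) (𝓝[>] 0) (𝓝 0) :=
    ((continuous_const.mul continuous_id).tendsto' 0 0 (by simp)).mono_left nhdsWithin_le_nhds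
  rw [← sub_eq_zero, ← norm_le_zero_iff]
  exact ge_of_tendsto hlim hsmall

end Planar

theorem dot3_eq_inner (x y : E3) : dot3 x y = ⟪x, y⟫_ℝ := by
  simp [dot3, PiLp.inner_apply, mul_comm]

theorem stmt1_general
    (Ω : Set E3) (hΩo : IsOpen Ω) (hΩb : Bornology.IsBounded Ω)
    (n : E3) (hn : ‖n‖ = 1)
    (T : ℝ) (hT : 0 < T)
    (h : ℝ → ℝ) (hcont : ContinuousOn h (Icc 0 T))
    (h0 : h 0 = sInf ((fun x => dot3 x n) '' Ω))
    (hTsup : h T = sSup ((fun x => dot3 x n) '' Ω))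
    (z : E3 → E3) (K : ℝ≥0) (hz : LipschitzOnWith K z Ω)
    (hZ : ∀ᵐ t ∂(volume.restrict (Ioo (0:ℝ) T)),
      ∃ (Z : E3 → E3) (K' : ℝ≥0), LipschitzOnWith K' Z Ω ∧
        (∀ᵐ x ∂(volume.restrict (Ω ∩ {x : E3 | dot3 x n < h t})),
          fderiv ℝ Z x = fderiv ℝ z x) ∧
        (∀ᵐ x ∂(volume.restrict (Ω ∩ {x : E3 | h t < dot3 x n})),
          fderiv ℝ Z x = 0))
    (hconn : ∀ t ∈ Ioo (0:ℝ) T, IsConnected (Ω ∩ {x : E3 | dot3 x n = h t})) :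
    ∃ (f : ℝ → E3) (Kf : ℝ≥0), LipschitzWith Kf f ∧ ∀ x ∈ Ω, z x = f (dot3 x n) := by
  simp only [dot3_eq_inner] at h0 hTsup hZ hconn ⊢
  have hlevel : ∀ x ∈ Ω, ⟪x, n⟫_ℝ ∈ Ioo (h 0) (h T) := fun x hx => by
    rw [h0, hTsup]
    exact inner_mem_Ioo_sInf_sSup hΩo hΩb hn hx
  have himage : (⟪·, n⟫_ℝ) '' Ω = Ioo (h 0) (h T) := by
    refine Subset.antisymm (image_subset_iff.2 hlevel) fun c hc => ?_
    obtain ⟨t, ht, rfl⟩ := intermediate_value_Ioo hT.le hcont hc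
    exact (hconn t ht).nonempty
  have hslice : ∀ x ∈ Ω, IsPreconnected (Ω ∩ {p | ⟪p, n⟫_ℝ = ⟪x, n⟫_ℝ}) := fun x hx => by
    obtain ⟨t, ht, hts⟩ := intermediate_value_Ioo hT.le hcont (hlevel x hx)
    rw [← hts]
    exact (hconn t ht).isPreconnected
  have htrunc : ∀ x ∈ Ω, ∀ δ > 0,
      ∃ c ∈ Ioo ⟪x, n⟫_ℝ (⟪x, n⟫_ℝ + δ), HasPlanarTruncation volume Ω n z c :=
    fun x hx δ hδ => exists_mem_Ioo_of_ae_restrict hT.le hcont hZ (lt_add_of_pos_right _ hδ)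
      (hlevel x hx).1.le (hlevel x hx).2
  exact exists_lipschitzWith_eq_comp_inner hΩo hn hz
    (fun x hx y hy => eq_of_inner_eq_of_hasPlanarTruncation hΩo hn hz htrunc hslice hx hy)
    (himage ▸ ordConnected_Ioo)

/-- Proposition: planar Hadamard, part 2.  Under the hypotheses of the
planar moving-mask situation, if moreover `Ω ∩ {x·n = h(t)}` is connected for every
`t ∈ (0,T)`, then `z(x) = f(x·n)` for a Lipschitz `f : ℝ → ℝ³`. -/
theorem stmt1
    (Ω : Set E3) (hΩo : IsOpen Ω) (hΩb : Bornology.IsBounded Ω)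
    (hΩc : IsConnected Ω) (hΩl : HasLipschitzBoundary Ω)
    (n : E3) (hn : ‖n‖ = 1)
    (T : ℝ) (hT : 0 < T)
    (h : ℝ → ℝ) (hcont : ContinuousOn h (Icc 0 T)) (hmono : MonotoneOn h (Icc 0 T))
    (h0 : h 0 = sInf ((fun x => dot3 x n) '' Ω))
    (hTsup : h T = sSup ((fun x => dot3 x n) '' Ω))
    (z : E3 → E3) (K : ℝ≥0) (hz : LipschitzOnWith K z Ω)
    (hZ : ∀ᵐ t ∂(volume.restrict (Ioo (0:ℝ) T)),
      ∃ (Z : E3 → E3) (K' : ℝ≥0), LipschitzOnWith K' Z Ω ∧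
        (∀ᵐ x ∂(volume.restrict (Ω ∩ {x : E3 | dot3 x n < h t})),
          fderiv ℝ Z x = fderiv ℝ z x) ∧
        (∀ᵐ x ∂(volume.restrict (Ω ∩ {x : E3 | h t < dot3 x n})),
          fderiv ℝ Z x = 0))
    (hconn : ∀ t ∈ Ioo (0:ℝ) T, IsConnected (Ω ∩ {x : E3 | dot3 x n = h t})) :
    ∃ (f : ℝ → E3) (Kf : ℝ≥0), LipschitzWith Kf f ∧ ∀ x ∈ Ω, z x = f (dot3 x n) :=
  stmt1_general Ω hΩo hΩb n hn T hT h hcont h0 hTsup z K hz hZ hconn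
end
end

section
/- Let a, n ∈ ℝ³ with |n| = 1, let F := I + a ⊗ n, and let 𝔇 := det F = 1 + a·n, assumed positive. Let σ₁ ≤ σ₂ ≤ σ₃ denote the singular values of F (the square roots of the eigenvalues of FᵀF). Then σ₂ = 1, σ₁σ₃ = 𝔇 and |a| = σ₃ − σ₁. Consequently, if 0 < λ_min ≤ λ_max are constants with λ_min ≤ σ₁ and σ₃ ≤ λ_max, then |𝔇 − 1| ≤ |a| ≤ λ_max − λ_min. -/
open MeasureTheory Set Polynomial
open scoped NNReal ENNReal

noncomputable section

/-!
`FᵀF = I + a ⊗ n + n ⊗ a + |a|² n ⊗ n` has trace `1 + 2𝔇 + |a|²`, second invariant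
`𝔇² + 2𝔇 + |a|²` and determinant `𝔇²`, so its characteristic polynomial is
`(t - 1)(t² - (2𝔇 + |a|²) t + 𝔇²)`. At `t = 1` the quadratic factor equals `(𝔇 - 1)² - |a|²`,
which is `≤ 0` by Cauchy–Schwarz since `𝔇 - 1 = a · n`; hence `1` is the middle eigenvalue, and the
other two have product `𝔇²` and sum `2𝔇 + |a|²`, giving `σ₁σ₃ = 𝔇` and `(σ₃ - σ₁)² = |a|²`.
-/

namespace Matrix

theorem charpoly_fin_three {R : Type*} [CommRing R] (M : Matrix (Fin 3) (Fin 3) R) :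
    M.charpoly = X ^ 3 - C M.trace * X ^ 2
      + C (M 0 0 * M 1 1 - M 0 1 * M 1 0 + M 0 0 * M 2 2 - M 0 2 * M 2 0
        + M 1 1 * M 2 2 - M 1 2 * M 2 1) * X - C M.det := by
  rw [charpoly, det_fin_three, det_fin_three, trace_fin_three]
  simp only [charmatrix_apply, diagonal_apply, Fin.isValue, Fin.reduceEq, ↓reduceIte, map_add,
    map_sub, map_mul]
  ring

end Matrix

namespace Polynomial

theorem vieta_of_X_sub_C_mul_eq_cubic {R : Type*} [CommRing R] {x y z e₁ e₂ e₃ : R}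
    (h : (X - C x) * (X - C y) * (X - C z) = X ^ 3 - C e₁ * X ^ 2 + C e₂ * X - C e₃) :
    x + y + z = e₁ ∧ x * y + x * z + y * z = e₂ ∧ x * y * z = e₃ := by
  have hexp : (X - C x) * (X - C y) * (X - C z) =
      X ^ 3 - C (x + y + z) * X ^ 2 + C (x * y + x * z + y * z) * X - C (x * y * z) := by
    simp only [map_add, map_mul]; ring
  rw [hexp] at h
  refine ⟨?_, ?_, ?_⟩
  · have h₂ := congrArg (coeff · 2) h
    simp [coeff_X_pow, -map_add, -map_mul] at h₂
    linear_combination -h₂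
  · simpa [coeff_X_pow, coeff_X, -map_add, -map_mul] using congrArg (coeff · 1) h
  · simpa [coeff_X_pow, coeff_X, -map_add, -map_mul] using congrArg (coeff · 0) h

end Polynomial

section OrderedRing

variable {K : Type*} [CommRing K] [LinearOrder K] [IsStrictOrderedRing K]

theorem middle_eq_of_prod_sub_eq_zero_of_sum_mul_sub_nonpos {x₁ x₂ x₃ c : K}
    (h12 : x₁ ≤ x₂) (h23 : x₂ ≤ x₃) (hprod : (c - x₁) * (c - x₂) * (c - x₃) = 0)
    (hsum : (c - x₁) * (c - x₂) + (c - x₁) * (c - x₃) + (c - x₂) * (c - x₃) ≤ 0) :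
    x₂ = c := by
  rcases lt_trichotomy x₂ c with hlt | heq | hgt
  · have h₁₂ : 0 < (c - x₁) * (c - x₂) := mul_pos (by linarith) (by linarith)
    have h₃ : c - x₃ = 0 := (mul_eq_zero.1 hprod).resolve_left h₁₂.ne'
    rw [h₃] at hsum
    linarith
  · exact heq
  · have h₂₃ : 0 < (c - x₂) * (c - x₃) := mul_pos_of_neg_of_neg (by linarith) (by linarith)
    rw [mul_assoc] at hprod
    have h₁ : c - x₁ = 0 := (mul_eq_zero.1 hprod).resolve_right h₂₃.ne'
    rw [h₁] at hsum
    linarith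

theorem singular_values_of_vieta {σ₁ σ₂ σ₃ D r : K} (hσ₁ : 0 ≤ σ₁) (h12 : σ₁ ≤ σ₂)
    (h23 : σ₂ ≤ σ₃) (hD : 0 ≤ D) (hr : 0 ≤ r) (hDr : |D - 1| ≤ r)
    (he₁ : σ₁ ^ 2 + σ₂ ^ 2 + σ₃ ^ 2 = 1 + 2 * D + r ^ 2)
    (he₂ : σ₁ ^ 2 * σ₂ ^ 2 + σ₁ ^ 2 * σ₃ ^ 2 + σ₂ ^ 2 * σ₃ ^ 2 = D ^ 2 + 2 * D + r ^ 2)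
    (he₃ : σ₁ ^ 2 * σ₂ ^ 2 * σ₃ ^ 2 = D ^ 2) :
    σ₂ = 1 ∧ σ₁ * σ₃ = D ∧ r = σ₃ - σ₁ := by
  have hσ₂ : 0 ≤ σ₂ := hσ₁.trans h12
  have hσ₃ : 0 ≤ σ₃ := hσ₂.trans h23
  have hsq₂ : σ₂ ^ 2 = 1 := by
    have hDr2 : (D - 1) ^ 2 ≤ r ^ 2 := by
      simpa only [sq_abs] using pow_le_pow_left₀ (abs_nonneg _) hDr 2
    exact middle_eq_of_prod_sub_eq_zero_of_sum_mul_sub_nonpos (x₁ := σ₁ ^ 2) (x₃ := σ₃ ^ 2)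
      (by gcongr) (by gcongr) (by linear_combination -he₁ + he₂ - he₃)
      (by linear_combination -2 * he₁ + he₂ + hDr2)
  have h₂ : σ₂ = 1 := (pow_left_inj₀ hσ₂ zero_le_one two_ne_zero).1 (by rw [hsq₂, one_pow])
  have h₁₃ : σ₁ * σ₃ = D := (pow_left_inj₀ (mul_nonneg hσ₁ hσ₃) hD two_ne_zero).1
    (by linear_combination he₃ - σ₁ ^ 2 * σ₃ ^ 2 * hsq₂)
  refine ⟨h₂, h₁₃, (pow_left_inj₀ hr (sub_nonneg.2 (h12.trans h23)) two_ne_zero).1 ?_⟩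
  linear_combination -he₁ + hsq₂ + 2 * h₁₃

end OrderedRing

section OneAddTens

open Matrix

variable (a n : E3)

theorem dot3_eq_inner_s9 : dot3 a n = inner ℝ a n := by
  simp [dot3, PiLp.inner_apply, mul_comm]

theorem dot3_self_eq_norm_sq : dot3 a a = ‖a‖ ^ 2 := by
  rw [dot3_eq_inner_s9, real_inner_self_eq_norm_sq]

theorem det_one_add_tens : (1 + tens a n).det = 1 + dot3 a n := by
  have htens : tens a n = replicateCol Unit a * replicateRow Unit n := by
    rw [← vecMulVec_eq]; rfl
  rw [htens, det_one_add_replicateCol_mul_replicateRow, dot3, dotProduct]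
  simp [mul_comm]

theorem charpoly_transpose_mul_one_add_tens (hn : ‖n‖ = 1) :
    ((1 + tens a n)ᵀ * (1 + tens a n)).charpoly =
      X ^ 3 - C (1 + 2 * (1 + dot3 a n) + ‖a‖ ^ 2) * X ^ 2
        + C ((1 + dot3 a n) ^ 2 + 2 * (1 + dot3 a n) + ‖a‖ ^ 2) * X
        - C ((1 + dot3 a n) ^ 2) := by
  set M := (1 + tens a n)ᵀ * (1 + tens a n)
  have hn2 : dot3 n n = 1 := by rw [dot3_self_eq_norm_sq, hn, one_pow]
  have hM : ∀ i j, M i j =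
      (if i = j then 1 else 0) + a i * n j + n i * a j + dot3 a a * n i * n j := by
    intro i j
    fin_cases i <;> fin_cases j <;>
      simp [M, tens, mul_apply, Fin.sum_univ_three, one_apply, dot3] <;> ring
  have htr : M.trace = 1 + 2 * (1 + dot3 a n) + ‖a‖ ^ 2 := by
    rw [trace_fin_three, hM, hM, hM, ← dot3_self_eq_norm_sq]
    simp only [dot3, Fin.sum_univ_three] at hn2 ⊢
    simp only [↓reduceIte, Fin.isValue]
    linear_combination (a 0 * a 0 + a 1 * a 1 + a 2 * a 2) * hn2
  have he₂ : M 0 0 * M 1 1 - M 0 1 * M 1 0 + M 0 0 * M 2 2 - M 0 2 * M 2 0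
      + M 1 1 * M 2 2 - M 1 2 * M 2 1 = (1 + dot3 a n) ^ 2 + 2 * (1 + dot3 a n) + ‖a‖ ^ 2 := by
    simp only [hM, ← dot3_self_eq_norm_sq]
    simp only [dot3, Fin.sum_univ_three] at hn2 ⊢
    simp only [↓reduceIte, Fin.isValue, Fin.reduceEq]
    linear_combination (a 0 * a 0 + a 1 * a 1 + a 2 * a 2) * hn2
  rw [charpoly_fin_three, htr, he₂, det_mul, det_transpose, det_one_add_tens, ← sq]

end OneAddTens

/-- singular values of `I + a ⊗ n`.  If `|n| = 1` and
`𝔇 = det(I + a⊗n) = 1 + a·n > 0`, then the singular values `σ₁ ≤ σ₂ ≤ σ₃` of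
`F = I + a⊗n` (square roots of the eigenvalues of `FᵀF`, encoded via the characteristic
polynomial) satisfy `σ₂ = 1`, `σ₁σ₃ = 𝔇` and `|a| = σ₃ − σ₁`; consequently, whenever
`0 < λ_min ≤ σ₁` and `σ₃ ≤ λ_max`, one has `|𝔇 − 1| ≤ |a| ≤ λ_max − λ_min`. -/
theorem stmt9
    (a n : E3) (hn : ‖n‖ = 1)
    (F : Mat3) (hF : F = 1 + tens a n)
    (D : ℝ) (hD : D = 1 + dot3 a n) (hDpos : 0 < D)
    (σ₁ σ₂ σ₃ : ℝ) (hσ0 : 0 ≤ σ₁) (h12 : σ₁ ≤ σ₂) (h23 : σ₂ ≤ σ₃)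
    (hchar : (F.transpose * F).charpoly =
      (X - C (σ₁ ^ 2)) * (X - C (σ₂ ^ 2)) * (X - C (σ₃ ^ 2))) :
    F.det = D ∧ σ₂ = 1 ∧ σ₁ * σ₃ = D ∧ ‖a‖ = σ₃ - σ₁ ∧
    ∀ lmin lmax : ℝ, 0 < lmin → lmin ≤ lmax → lmin ≤ σ₁ → σ₃ ≤ lmax →
      |D - 1| ≤ ‖a‖ ∧ ‖a‖ ≤ lmax - lmin := by
  subst hF hD
  have hCS : |1 + dot3 a n - 1| ≤ ‖a‖ := by
    simpa [dot3_eq_inner_s9, hn] using abs_real_inner_le_norm a n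
  obtain ⟨he₁, he₂, he₃⟩ := vieta_of_X_sub_C_mul_eq_cubic
    (hchar.symm.trans (charpoly_transpose_mul_one_add_tens a n hn))
  obtain ⟨h₂, h₁₃, ha⟩ :=
    singular_values_of_vieta hσ0 h12 h23 hDpos.le (norm_nonneg a) hCS he₁ he₂ he₃
  exact ⟨det_one_add_tens a n, h₂, h₁₃, ha, fun lmin lmax _ _ hσ₁ hσ₃ => ⟨hCS, by linarith⟩⟩
end
end

section
/- Let Ω ⊂ ℝ³ be open, bounded, connected with Lipschitz boundary, and let z ∈ W^{1,∞}(Ω;ℝ³) be such that ∇z(x) = a(x) ⊗ n(x) for a.e. x ∈ Ω, where a, n : Ω → ℝ³ are measurable, |n| = 1 a.e., and a(x)·n(x) = 𝔇 − 1 for a.e. x for some constant 𝔇 ∈ ℝ. Then the divergence of the matrix field n ⊗ a vanishes in the sense of distributions: for every φ ∈ C_c^∞(Ω;ℝ) one has ∫_Ω (a(x)·∇φ(x)) n(x) dx = 0 (as a vector identity in ℝ³). -/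
open MeasureTheory Set
open scoped NNReal ENNReal
open scoped ContDiff

noncomputable section

/-! ### Auxiliary lemmas -/

/-- The standard basis vectors of `E3`. -/
def sing (j : Fin 3) : E3 := EuclideanSpace.single j (1:ℝ)

lemma sing_norm (j : Fin 3) : ‖sing j‖ = 1 := by
  simp [sing, EuclideanSpace.norm_single]

lemma sum_coord_smul_single (w : E3) : ∑ j, w j • sing j = w := by
  have := (EuclideanSpace.basisFun (Fin 3) ℝ).sum_repr w
  simpa [sing, EuclideanSpace.basisFun_apply, EuclideanSpace.basisFun_repr] using this

lemma sum_smul_single_coord (r : Fin 3 → ℝ) (k : Fin 3) :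
    (∑ j, r j • sing j) k = r k := by
  have h := sum_coord_smul_single ((WithLp.equiv 2 (Fin 3 → ℝ)).symm r)
  have h2 : ∀ j, ((WithLp.equiv 2 (Fin 3 → ℝ)).symm r) j = r j := fun j => rfl
  simp_rw [h2] at h
  rw [h]
  exact h2 k

lemma clm_expand (L : E3 →L[ℝ] ℝ) (w : E3) :
    L w = ∑ j, w j * L (sing j) := by
  conv_lhs => rw [← sum_coord_smul_single w]
  rw [map_sum]
  simp [smul_eq_mul]

lemma matCLM_apply_coord (M : Mat3) (v : E3) (k : Fin 3) :
    matCLM M v k = ∑ j, M k j * v j := rfl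

lemma matCLM_tens_apply (a n v : E3) : matCLM (tens a n) v = dot3 n v • a := by
  ext k
  rw [matCLM_apply_coord]
  simp only [tens, Matrix.of_apply, PiLp.smul_apply, smul_eq_mul, dot3]
  rw [Finset.sum_mul]
  apply Finset.sum_congr rfl
  intro j _
  ring

lemma dot3_single (n : E3) (i : Fin 3) : dot3 n (sing i) = n i := by
  simp [dot3, sing, EuclideanSpace.single_apply]

lemma coord_dist_le (x y : E3) (j : Fin 3) : dist (x j) (y j) ≤ dist x y := by
  rw [EuclideanSpace.dist_eq]
  have h : dist (x j) (y j) ^ 2 ≤ ∑ i, dist (x i) (y i) ^ 2 :=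
    Finset.single_le_sum (f := fun i => dist (x i) (y i) ^ 2)
      (fun i _ => sq_nonneg _) (Finset.mem_univ j)
  calc dist (x j) (y j) = Real.sqrt (dist (x j) (y j) ^ 2) := (Real.sqrt_sq dist_nonneg).symm
    _ ≤ _ := Real.sqrt_le_sqrt h

lemma coord_le_norm (v : E3) (j : Fin 3) : |v j| ≤ ‖v‖ := by
  have := coord_dist_le v 0 j
  simpa [Real.dist_eq] using this

lemma dot3_self (v : E3) : dot3 v v = ‖v‖ ^ 2 := by
  rw [EuclideanSpace.norm_eq, Real.sq_sqrt (by positivity)]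
  simp [dot3, sq]

lemma lip_norm_fderiv_le {f : E3 → ℝ} {C : ℝ≥0} (hf : LipschitzWith C f) (x : E3) :
    ‖fderiv ℝ f x‖ ≤ C := norm_fderiv_le_of_lipschitz ℝ hf

/-- Symmetry of second distributional derivatives: integration by parts twice for a Lipschitz
function against a smooth compactly supported function. -/
lemma ibp_symm {u : E3 → ℝ} {C : ℝ≥0} (hu : LipschitzWith C u)
    {g : E3 → ℝ} (hg : ContDiff ℝ (⊤ : ℕ∞) g) (hgc : HasCompactSupport g) (v w : E3) :
    ∫ x, fderiv ℝ u x v * fderiv ℝ g x w = ∫ x, fderiv ℝ u x w * fderiv ℝ g x v := by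
  have hg1 : ContDiff ℝ ∞ g := hg.of_le (by simp)
  have step : ∀ p q : E3, (∫ x, fderiv ℝ u x p * fderiv ℝ g x q)
      = ∫ x, (-(fderiv ℝ (fderiv ℝ g) x p q)) * u x := by
    intro p q
    have hgq_smooth : ContDiff ℝ ∞ (fun x => fderiv ℝ g x q) :=
      ContDiff.clm_apply (hg1.fderiv_right (m := ∞) (by simp)) contDiff_const
    have hgq_c : HasCompactSupport (fun x => fderiv ℝ g x q) := hgc.fderiv_apply ℝ q
    obtain ⟨Dq, hDq⟩ : ∃ Dq, LipschitzWith Dq (fun x => fderiv ℝ g x q) :=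
      ContDiff.lipschitzWith_of_hasCompactSupport hgq_c hgq_smooth (by simp)
    have h1 : (∫ x, fderiv ℝ u x p * fderiv ℝ g x q)
        = ∫ x, lineDeriv ℝ u x p * (fun x => fderiv ℝ g x q) x := by
      apply integral_congr_ae
      filter_upwards [hu.ae_differentiableAt] with x hx
      rw [hx.lineDeriv_eq_fderiv]
    rw [h1, LipschitzWith.integral_lineDeriv_mul_eq hu hDq hgq_c p]
    apply integral_congr_ae
    apply Filter.Eventually.of_forall
    intro x
    beta_reduce
    congr 1
    have hdiff : DifferentiableAt ℝ (fun x => fderiv ℝ g x q) x :=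
      (hgq_smooth.differentiable (by simp)).differentiableAt
    rw [hdiff.lineDeriv_eq_fderiv]
    have hc : DifferentiableAt ℝ (fderiv ℝ g) x :=
      ((hg1.fderiv_right (m := ∞) (by simp)).differentiable (by simp)).differentiableAt
    have h3 : fderiv ℝ (fun y => fderiv ℝ g y q) x = (fderiv ℝ (fderiv ℝ g) x).flip q := by
      rw [fderiv_clm_apply hc (differentiableAt_const q)]
      simp
    rw [h3]
    simp
  rw [step v w, step w v]
  apply integral_congr_ae
  apply Filter.Eventually.of_forall
  intro x
  beta_reduce
  have hsymm := ((hg.contDiffAt (x := x)).isSymmSndFDerivAt (by rw [minSmoothness_of_isRCLikeNormedField]; exact WithTop.coe_le_coe.mpr le_top)) v w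
  rw [hsymm]

lemma integral_fderiv_apply_eq_zero {g : E3 → ℝ} (hg : ContDiff ℝ (⊤ : ℕ∞) g)
    (hgc : HasCompactSupport g) (v : E3) : ∫ x, fderiv ℝ g x v = 0 := by
  have hg1 : ContDiff ℝ ∞ g := hg.of_le (by simp)
  obtain ⟨Dg, hDg⟩ : ∃ Dg, LipschitzWith Dg g :=
    ContDiff.lipschitzWith_of_hasCompactSupport hgc hg1 (by simp)
  have h := LipschitzWith.integral_lineDeriv_mul_eq (μ := volume)
    (LipschitzWith.const (1:ℝ)) hDg hgc (-v)
  have h0 : (∫ x : E3, lineDeriv ℝ (fun _ => (1:ℝ)) x (-v) * g x) = 0 := by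
    have h4 : ∀ x : E3, lineDeriv ℝ (fun _ => (1:ℝ)) x (-v) = 0 := by
      intro x
      simp [lineDeriv]
    simp [h4]
  rw [h] at h0
  have h2 : (∫ x : E3, lineDeriv ℝ g x (- -v) * (fun _ => (1:ℝ)) x)
      = ∫ x, fderiv ℝ g x v := by
    apply integral_congr_ae
    apply Filter.Eventually.of_forall
    intro x
    beta_reduce
    have hdiff : DifferentiableAt ℝ g x :=
      (hg1.differentiable (by simp)).differentiableAt
    rw [hdiff.lineDeriv_eq_fderiv]
    simp
  rw [h2] at h0
  exact h0

/-- Proposition 5.2, first part.  If `∇z = a ⊗ n` a.e. with `|n| = 1`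
and `a·n = 𝔇 − 1` constant, then `div(n ⊗ a) = 0` in the sense of distributions:
`∫_Ω (a·∇φ) n dx = 0` for every test function `φ` compactly supported in `Ω`. -/
theorem stmt10
    (Ω : Set E3) (hΩo : IsOpen Ω) (hΩb : Bornology.IsBounded Ω)
    (hΩc : IsConnected Ω) (hΩl : HasLipschitzBoundary Ω)
    (z : E3 → E3) (K : ℝ≥0) (hz : LipschitzOnWith K z Ω)
    (a nn : E3 → E3) (D : ℝ)
    (ha : AEStronglyMeasurable a (volume.restrict Ω))
    (hn : AEStronglyMeasurable nn (volume.restrict Ω))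
    (hunit : ∀ᵐ x ∂(volume.restrict Ω), ‖nn x‖ = 1)
    (hdn : ∀ᵐ x ∂(volume.restrict Ω), dot3 (a x) (nn x) = D - 1)
    (hgrad : ∀ᵐ x ∂(volume.restrict Ω), fderiv ℝ z x = matCLM (tens (a x) (nn x))) :
    ∀ φ : E3 → ℝ, ContDiff ℝ (⊤ : ℕ∞) φ → HasCompactSupport φ → tsupport φ ⊆ Ω →
      (∫ x in Ω, (fderiv ℝ φ x (a x)) • nn x) = 0 := by
  intro φ hφ hφc hφs
  classical
  have hφ1 : ContDiff ℝ ∞ φ := hφ.of_le (by simp)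
  obtain ⟨Lφ, hLφ⟩ : ∃ L, LipschitzWith L φ :=
    ContDiff.lipschitzWith_of_hasCompactSupport hφc hφ1 (by simp)
  -- coordinates of z are Lipschitz on Ω; extend them
  have hzj : ∀ j : Fin 3, LipschitzOnWith K (fun x => z x j) Ω := by
    intro j
    apply LipschitzOnWith.of_dist_le_mul
    intro x hx y hy
    exact le_trans (coord_dist_le (z x) (z y) j) (hz.dist_le_mul x hx y hy)
  choose u hu hequ using fun j => (hzj j).extend_real
  -- the assembled extension
  set zt : E3 → E3 := fun x => ∑ j, u j x • sing j with hzt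
  have hzt_eq : ∀ x ∈ Ω, zt x = z x := by
    intro x hx
    have h1 : ∀ j, u j x = z x j := fun j => (hequ j hx).symm
    simp only [hzt, h1]
    exact sum_coord_smul_single (z x)
  -- a.e. differentiability of all coordinates
  have hud : ∀ᵐ x : E3, ∀ j, DifferentiableAt ℝ (u j) x := by
    rw [ae_all_iff]
    exact fun j => (hu j).ae_differentiableAt
  -- derivative of zt at points where all coordinates are differentiable
  have hztd : ∀ x, (∀ j, DifferentiableAt ℝ (u j) x) →
      HasFDerivAt zt (∑ j, (fderiv ℝ (u j) x).smulRight (sing j)) x := by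
    intro x hx
    exact HasFDerivAt.fun_sum (fun j _ => ((hx j).hasFDerivAt).smul_const (sing j))
  have hcoord : ∀ (x : E3), (∀ j, DifferentiableAt ℝ (u j) x) → ∀ (v : E3) (k : Fin 3),
      (fderiv ℝ zt x) v k = fderiv ℝ (u k) x v := by
    intro x hx v k
    rw [(hztd x hx).fderiv, ContinuousLinearMap.sum_apply]
    simp only [ContinuousLinearMap.smulRight_apply]
    exact sum_smul_single_coord (fun j => fderiv ℝ (u j) x v) k
  -- on Ω, fderiv zt agrees with fderiv z
  have hfd : ∀ x ∈ Ω, fderiv ℝ zt x = fderiv ℝ z x := by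
    intro x hx
    have h5 : zt =ᶠ[nhds x] z :=
      Filter.eventuallyEq_of_mem (hΩo.mem_nhds hx) (fun y hy => hzt_eq y hy)
    exact h5.fderiv_eq
  -- the key pointwise facts, a.e. on Ω
  have hkey : ∀ᵐ x ∂(volume.restrict Ω),
      (∀ j i, fderiv ℝ (u j) x (sing i) = nn x i * a x j) := by
    filter_upwards [ae_restrict_mem hΩo.measurableSet, ae_restrict_of_ae hud, hgrad]
      with x hx hxd hxg
    intro j i
    rw [← hcoord x hxd (sing i) j, hfd x hx, hxg, matCLM_tens_apply, dot3_single]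
    simp [mul_comm]
  -- global bound on the derivatives of u j
  have hubd : ∀ (j : Fin 3) (v : E3) (x : E3), |fderiv ℝ (u j) x v| ≤ (K : ℝ) * ‖v‖ := by
    intro j v x
    calc |fderiv ℝ (u j) x v| ≤ ‖fderiv ℝ (u j) x‖ * ‖v‖ := (fderiv ℝ (u j) x).le_opNorm v
      _ ≤ (K : ℝ) * ‖v‖ :=
        mul_le_mul_of_nonneg_right (lip_norm_fderiv_le (hu j) x) (norm_nonneg v)
  have hubd' : ∀ (j p : Fin 3) (x : E3), |fderiv ℝ (u j) x (sing p)| ≤ (K : ℝ) := by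
    intro j p x
    have := hubd j (sing p) x
    rwa [sing_norm p, mul_one] at this
  -- integrability of the building blocks (globally)
  have hφd_cont : ∀ q : Fin 3, Continuous (fun x => fderiv ℝ φ x (sing q)) := by
    intro q
    exact (hφ1.continuous_fderiv (by simp)).clm_apply continuous_const
  have hφd_supp : ∀ q : Fin 3, HasCompactSupport (fun x => fderiv ℝ φ x (sing q)) :=
    fun q => hφc.fderiv_apply ℝ (sing q)
  have hInt : ∀ (j p q : Fin 3),
      Integrable (fun x => fderiv ℝ (u j) x (sing p) * fderiv ℝ φ x (sing q)) volume := by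
    intro j p q
    apply Integrable.bdd_mul ((hφd_cont q).integrable_of_hasCompactSupport (hφd_supp q))
      ((measurable_fderiv_apply_const ℝ (u j) (sing p)).aestronglyMeasurable)
    exact Filter.Eventually.of_forall (fun x => by simpa [Real.norm_eq_abs] using hubd' j p x)
  -- the derivative of φ vanishes outside Ω
  have hφzero : ∀ x, x ∉ Ω → fderiv ℝ φ x = 0 := by
    intro x hx
    have h6 : x ∉ tsupport φ := fun h => hx (hφs h)
    exact fderiv_of_notMem_tsupport ℝ h6
  -- component-wise computation
  have hcomp : ∀ i : Fin 3, (∫ x in Ω, fderiv ℝ φ x (a x) * nn x i) = 0 := by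
    intro i
    have e1 : (∫ x in Ω, fderiv ℝ φ x (a x) * nn x i)
        = ∫ x in Ω, ∑ j, fderiv ℝ (u j) x (sing i) * fderiv ℝ φ x (sing j) := by
      apply integral_congr_ae
      filter_upwards [hkey] with x hx
      rw [clm_expand (fderiv ℝ φ x) (a x), Finset.sum_mul]
      apply Finset.sum_congr rfl
      intro j _
      rw [hx j i]
      ring
    have e2 : (∫ x in Ω, ∑ j, fderiv ℝ (u j) x (sing i) * fderiv ℝ φ x (sing j))
        = ∑ j, ∫ x in Ω, fderiv ℝ (u j) x (sing i) * fderiv ℝ φ x (sing j) :=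
      integral_finset_sum _ (fun j _ => (hInt j i j).integrableOn)
    have e3 : ∀ j : Fin 3, (∫ x in Ω, fderiv ℝ (u j) x (sing i) * fderiv ℝ φ x (sing j))
        = ∫ x, fderiv ℝ (u j) x (sing i) * fderiv ℝ φ x (sing j) := by
      intro j
      apply setIntegral_eq_integral_of_forall_compl_eq_zero
      intro x hx
      rw [hφzero x hx]
      simp
    have e4 : ∀ j : Fin 3, (∫ x, fderiv ℝ (u j) x (sing i) * fderiv ℝ φ x (sing j))
        = ∫ x, fderiv ℝ (u j) x (sing j) * fderiv ℝ φ x (sing i) :=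
      fun j => ibp_symm (hu j) hφ hφc (sing i) (sing j)
    have e5 : (∑ j : Fin 3, ∫ x, fderiv ℝ (u j) x (sing j) * fderiv ℝ φ x (sing i))
        = ∫ x, ∑ j, fderiv ℝ (u j) x (sing j) * fderiv ℝ φ x (sing i) :=
      (integral_finset_sum _ (fun j _ => hInt j j i)).symm
    have e6 : (∫ x, ∑ j, fderiv ℝ (u j) x (sing j) * fderiv ℝ φ x (sing i))
        = ∫ x in Ω, ∑ j, fderiv ℝ (u j) x (sing j) * fderiv ℝ φ x (sing i) := by
      symm
      apply setIntegral_eq_integral_of_forall_compl_eq_zero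
      intro x hx
      rw [hφzero x hx]
      simp
    have e7 : (∫ x in Ω, ∑ j, fderiv ℝ (u j) x (sing j) * fderiv ℝ φ x (sing i))
        = ∫ x in Ω, (D - 1) * fderiv ℝ φ x (sing i) := by
      apply integral_congr_ae
      filter_upwards [hkey, hdn] with x hx hx2
      rw [← Finset.sum_mul]
      congr 1
      have h9 : ∀ j ∈ Finset.univ, fderiv ℝ (u j) x (sing j) = a x j * nn x j := by
        intro j _
        rw [hx j j]; ring
      rw [Finset.sum_congr rfl h9, ← hx2]
      rfl
    have e8 : (∫ x in Ω, (D - 1) * fderiv ℝ φ x (sing i)) = 0 := by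
      rw [integral_const_mul]
      have h10 : (∫ x in Ω, fderiv ℝ φ x (sing i))
          = ∫ x, fderiv ℝ φ x (sing i) := by
        apply setIntegral_eq_integral_of_forall_compl_eq_zero
        intro x hx
        rw [hφzero x hx]
        simp
      rw [h10, integral_fderiv_apply_eq_zero hφ hφc (sing i), mul_zero]
    rw [e1, e2]
    calc (∑ j, ∫ x in Ω, fderiv ℝ (u j) x (sing i) * fderiv ℝ φ x (sing j))
        = ∑ j, ∫ x, fderiv ℝ (u j) x (sing j) * fderiv ℝ φ x (sing i) := by
          apply Finset.sum_congr rfl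
          intro j _
          rw [e3 j, e4 j]
      _ = 0 := by rw [e5, e6, e7, e8]
  -- measurability of the scalar factor
  have haj : ∀ j : Fin 3, AEStronglyMeasurable (fun x => a x j) (volume.restrict Ω) :=
    fun j => (EuclideanSpace.proj (𝕜 := ℝ) j).continuous.comp_aestronglyMeasurable ha
  have hsm : AEStronglyMeasurable (fun x => fderiv ℝ φ x (a x)) (volume.restrict Ω) := by
    have h11 : (fun x => fderiv ℝ φ x (a x))
        = fun x => ∑ j, a x j * fderiv ℝ φ x (sing j) := by
      funext x
      exact clm_expand (fderiv ℝ φ x) (a x)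
    rw [h11]
    exact Finset.aestronglyMeasurable_fun_sum _ (fun j _ =>
      (haj j).mul ((hφd_cont j).aestronglyMeasurable))
  haveI hfin : IsFiniteMeasure (volume.restrict Ω) :=
    ⟨by rw [Measure.restrict_apply_univ]; exact hΩb.measure_lt_top⟩
  -- a.e. bound on the integrand
  have habd : ∀ᵐ x ∂(volume.restrict Ω),
      ‖(fderiv ℝ φ x (a x)) • nn x‖ ≤ 9 * ((K : ℝ) * (Lφ : ℝ)) := by
    filter_upwards [hkey, hunit] with x hx hxu
    have hacoord : ∀ j, |a x j| ≤ 3 * (K : ℝ) := by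
      intro j
      have h12 : a x j = ∑ i, nn x i * fderiv ℝ (u j) x (sing i) := by
        have h13 : ∀ i ∈ Finset.univ, nn x i * fderiv ℝ (u j) x (sing i)
            = nn x i * nn x i * a x j := by
          intro i _
          rw [hx j i]; ring
        rw [Finset.sum_congr rfl h13, ← Finset.sum_mul]
        have hd : (∑ i, nn x i * nn x i) = 1 := by
          have h14 := dot3_self (nn x)
          rw [hxu] at h14
          simpa [dot3] using h14
        rw [hd, one_mul]
      rw [h12]
      calc |∑ i, nn x i * fderiv ℝ (u j) x (sing i)|
          ≤ ∑ i, |nn x i * fderiv ℝ (u j) x (sing i)| := Finset.abs_sum_le_sum_abs _ _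
        _ ≤ ∑ _i : Fin 3, (1 : ℝ) * (K : ℝ) := by
            apply Finset.sum_le_sum
            intro i _
            rw [abs_mul]
            apply mul_le_mul ?_ (hubd' j i x) (abs_nonneg _) zero_le_one
            calc |nn x i| ≤ ‖nn x‖ := coord_le_norm (nn x) i
              _ = 1 := hxu
        _ = 3 * (K : ℝ) := by
            rw [Finset.sum_const, Finset.card_univ, Fintype.card_fin]
            push_cast
            ring
    have hφbd : ∀ q : Fin 3, |fderiv ℝ φ x (sing q)| ≤ (Lφ : ℝ) := by
      intro q
      calc |fderiv ℝ φ x (sing q)| ≤ ‖fderiv ℝ φ x‖ * ‖sing q‖ :=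
            (fderiv ℝ φ x).le_opNorm (sing q)
        _ ≤ (Lφ : ℝ) * 1 := by
            apply mul_le_mul (lip_norm_fderiv_le hLφ x) (le_of_eq (sing_norm q))
              (norm_nonneg _) NNReal.zero_le_coe
        _ = (Lφ : ℝ) := mul_one _
    have hs : |fderiv ℝ φ x (a x)| ≤ 9 * ((K : ℝ) * (Lφ : ℝ)) := by
      rw [clm_expand (fderiv ℝ φ x) (a x)]
      calc |∑ j, a x j * fderiv ℝ φ x (sing j)|
          ≤ ∑ j, |a x j * fderiv ℝ φ x (sing j)| := Finset.abs_sum_le_sum_abs _ _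
        _ ≤ ∑ _j : Fin 3, (3 * (K : ℝ)) * (Lφ : ℝ) := by
            apply Finset.sum_le_sum
            intro j _
            rw [abs_mul]
            exact mul_le_mul (hacoord j) (hφbd j) (abs_nonneg _) (by positivity)
        _ = 9 * ((K : ℝ) * (Lφ : ℝ)) := by
            rw [Finset.sum_const, Finset.card_univ, Fintype.card_fin]
            push_cast
            ring
    calc ‖(fderiv ℝ φ x (a x)) • nn x‖ = |fderiv ℝ φ x (a x)| * ‖nn x‖ := by
          rw [norm_smul, Real.norm_eq_abs]
      _ = |fderiv ℝ φ x (a x)| := by rw [hxu, mul_one]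
      _ ≤ 9 * ((K : ℝ) * (Lφ : ℝ)) := hs
  have hIntV : Integrable (fun x => (fderiv ℝ φ x (a x)) • nn x) (volume.restrict Ω) :=
    ⟨hsm.smul hn, HasFiniteIntegral.of_bounded habd⟩
  -- conclude: all coordinates of the vector integral vanish
  have hfinal : ∀ i : Fin 3, (∫ x in Ω, (fderiv ℝ φ x (a x)) • nn x) i = 0 := by
    intro i
    have h15 := (EuclideanSpace.proj (𝕜 := ℝ) i).integral_comp_comm hIntV
    have h16 : (fun x => EuclideanSpace.proj (𝕜 := ℝ) i ((fderiv ℝ φ x (a x)) • nn x))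
        = fun x => fderiv ℝ φ x (a x) * nn x i := by
      funext x
      simp [EuclideanSpace.proj]
    rw [h16] at h15
    have h17 := hcomp i
    rw [h15] at h17
    exact h17
  ext i
  exact hfinal i
end
end

section
/- Let μ > 0 with μ ≠ 1, let 𝔇 > 0, and suppose there exist a ∈ ℝ³ and unit vectors n, v ∈ ℝ³ such that the matrix F = I + a ⊗ n satisfies det F = 𝔇 and FᵀF v = μ² v. Then 𝔇 ≠ μ², the component n·v is nonzero and satisfies (n·v)² = μ²(1 − μ²)/(𝔇² − μ⁴), |a| = |𝔇 − μ²|/μ, and in particular the necessary condition 0 < μ²(1 − μ²)/(𝔇² − μ⁴) ≤ 1 holds. -/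
open MeasureTheory Set
open scoped NNReal ENNReal

noncomputable section

open scoped RealInnerProductSpace

lemma mulV_apply' (M : Mat3) (x : E3) (i : Fin 3) :
    mulV M x i = ∑ j, M i j * x j := by
  simp [mulV, matCLM, Matrix.toEuclideanCLM, Matrix.toEuclideanLin_apply,
    Matrix.mulVec, dotProduct]
  rfl

lemma dot3_inner (x y : E3) : dot3 x y = ⟪x, y⟫ := by
  simp [dot3, PiLp.inner_apply, RCLike.inner_apply, conj_trivial, mul_comm]

/-- Remark 5.6: the necessary condition (61).  If `F = I + a ⊗ n`
with `|n| = 1` satisfies `det F = 𝔇 > 0` and `FᵀF v = μ² v` for a unit vector `v`, with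
`μ > 0`, `μ ≠ 1`, then `𝔇 ≠ μ²`, `(n·v)² = μ²(1 − μ²)/(𝔇² − μ⁴)` with `n·v ≠ 0`,
`|a| = |𝔇 − μ²|/μ`, and in particular `0 < μ²(1 − μ²)/(𝔇² − μ⁴) ≤ 1`. -/
theorem stmt13
    (μ D : ℝ) (hμ : 0 < μ) (hμ1 : μ ≠ 1) (hDpos : 0 < D)
    (a nn v : E3) (hn : ‖nn‖ = 1) (hv : ‖v‖ = 1)
    (F : Mat3) (hF : F = 1 + tens a nn)
    (hdet : F.det = D)
    (heig : mulV (F.transpose * F) v = (μ ^ 2) • v) :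
    D ≠ μ ^ 2 ∧
    dot3 nn v ≠ 0 ∧
    (dot3 nn v) ^ 2 = μ ^ 2 * (1 - μ ^ 2) / (D ^ 2 - μ ^ 4) ∧
    ‖a‖ = |D - μ ^ 2| / μ ∧
    (0 < μ ^ 2 * (1 - μ ^ 2) / (D ^ 2 - μ ^ 4) ∧
      μ ^ 2 * (1 - μ ^ 2) / (D ^ 2 - μ ^ 4) ≤ 1) := by
  have hμ2 : (0:ℝ) < μ ^ 2 := by positivity
  have hdet' : D = 1 + dot3 a nn := by
    rw [← hdet, hF]
    simp [Matrix.det_fin_three, tens, Matrix.one_apply, dot3, Fin.sum_univ_three]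
    ring
  have hv2 : dot3 v v = 1 := by
    rw [dot3_inner, real_inner_self_eq_norm_sq, hv]; norm_num
  have hn2 : dot3 nn nn = 1 := by
    rw [dot3_inner, real_inner_self_eq_norm_sq, hn]; norm_num
  have mk : ∀ i, mulV (F.transpose * F) v i = μ ^ 2 * v i := by
    intro i; rw [heig]; rfl
  have m0 := mk 0; have m1 := mk 1; have m2 := mk 2
  rw [mulV_apply'] at m0 m1 m2
  simp only [hF, Matrix.mul_apply, Matrix.transpose_apply, Matrix.add_apply,
    Matrix.one_apply, tens, Matrix.of_apply, Fin.sum_univ_three] at m0 m1 m2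
  simp at m0 m1 m2
  have k0 : v 0 + dot3 a v * nn 0 + dot3 nn v * a 0
      + dot3 a a * (dot3 nn v * nn 0) = μ ^ 2 * v 0 := by
    simp only [dot3, Fin.sum_univ_three]; linear_combination m0
  have k1 : v 1 + dot3 a v * nn 1 + dot3 nn v * a 1
      + dot3 a a * (dot3 nn v * nn 1) = μ ^ 2 * v 1 := by
    simp only [dot3, Fin.sum_univ_three]; linear_combination m1
  have k2 : v 2 + dot3 a v * nn 2 + dot3 nn v * a 2
      + dot3 a a * (dot3 nn v * nn 2) = μ ^ 2 * v 2 := by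
    simp only [dot3, Fin.sum_univ_three]; linear_combination m2
  clear m0 m1 m2
  set B := dot3 a v with hB
  set G := dot3 nn v with hGdef
  set A := dot3 a a with hA
  set AL := dot3 a nn with hAL
  have E2 : 1 + 2 * B * G + A * G ^ 2 = μ ^ 2 := by
    simp only [hB, hGdef, hA, dot3, Fin.sum_univ_three] at *
    linear_combination v 0 * k0 + v 1 * k1 + v 2 * k2 + (μ ^ 2 - 1) * hv2
  have E4 : B + B * AL + G * A + A * G * AL = μ ^ 2 * B := by
    simp only [hB, hGdef, hA, hAL, dot3, Fin.sum_univ_three] at *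
    linear_combination a 0 * k0 + a 1 * k1 + a 2 * k2
  have E3 : G + B + G * AL + A * G = μ ^ 2 * G := by
    simp only [hB, hGdef, hA, hAL, dot3, Fin.sum_univ_three] at *
    linear_combination nn 0 * k0 + nn 1 * k1 + nn 2 * k2
      - ((a 0 * v 0 + a 1 * v 1 + a 2 * v 2)
        + (a 0 * a 0 + a 1 * a 1 + a 2 * a 2) * (nn 0 * v 0 + nn 1 * v 1 + nn 2 * v 2)) * hn2
  have E1 : D = 1 + AL := hdet'
  have hBp : B + A * G = G * (μ ^ 2 - D) := by linear_combination E3 + G * E1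
  have hB2 : μ ^ 2 * B = D * G * (μ ^ 2 - D) := by
    linear_combination (-1 : ℝ) * E4 + (1 + AL) * hBp - G * (μ ^ 2 - D) * E1
  have hAG : G * (μ ^ 2 * A) = G * ((μ ^ 2 - D) ^ 2) := by
    linear_combination μ ^ 2 * hBp - hB2
  have hμne : μ ^ 2 ≠ 1 := by
    intro h
    have h1 : (μ - 1) * (μ + 1) = 0 := by linear_combination h
    rcases mul_eq_zero.mp h1 with h2 | h2
    · exact hμ1 (by linarith)
    · linarith
  have hGne : G ≠ 0 := by
    intro h0
    rw [h0] at E2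
    apply hμne
    linear_combination -E2
  have hAval : μ ^ 2 * A = (μ ^ 2 - D) ^ 2 := mul_left_cancel₀ hGne hAG
  have hGsq : G ^ 2 * (D ^ 2 - μ ^ 4) = μ ^ 2 * (1 - μ ^ 2) := by
    apply mul_left_cancel₀ (ne_of_gt hμ2)
    linear_combination (-(μ ^ 2)) * μ ^ 2 * E2 + 2 * G * μ ^ 2 * hB2 + G ^ 2 * μ ^ 2 * hAval
  have hDne : D ≠ μ ^ 2 := by
    intro h
    rw [h] at hGsq
    apply hμne
    have h3 : μ ^ 2 * (1 - μ ^ 2) = 0 := by linear_combination -hGsq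
    rcases mul_eq_zero.mp h3 with h2 | h2
    · exact absurd h2 (ne_of_gt hμ2)
    · linarith
  have hDen : D ^ 2 - μ ^ 4 ≠ 0 := by
    intro h
    have h3 : (D - μ ^ 2) * (D + μ ^ 2) = 0 := by linear_combination h
    rcases mul_eq_zero.mp h3 with h2 | h2
    · exact hDne (by linarith)
    · linarith
  have hGval : G ^ 2 = μ ^ 2 * (1 - μ ^ 2) / (D ^ 2 - μ ^ 4) := by
    field_simp
    linear_combination hGsq
  have hCS : |G| ≤ 1 := by
    have h := abs_real_inner_le_norm nn v
    rw [hn, hv] at h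
    rw [hGdef, dot3_inner]
    simpa using h
  have hGpos : 0 < G ^ 2 := by positivity
  have hnorm : ‖a‖ = |D - μ ^ 2| / μ := by
    have hA2 : ‖a‖ ^ 2 = (|D - μ ^ 2| / μ) ^ 2 := by
      have h1 : A = ‖a‖ ^ 2 := by rw [hA, dot3_inner, real_inner_self_eq_norm_sq]
      have h2 : (|D - μ ^ 2| / μ) ^ 2 = (D - μ ^ 2) ^ 2 / μ ^ 2 := by
        rw [div_pow, sq_abs]
      rw [h2, ← h1, eq_div_iff (ne_of_gt hμ2)]
      linear_combination hAval
    have h3 : 0 ≤ |D - μ ^ 2| / μ := by positivity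
    calc ‖a‖ = Real.sqrt (‖a‖ ^ 2) := (Real.sqrt_sq (norm_nonneg a)).symm
      _ = Real.sqrt ((|D - μ ^ 2| / μ) ^ 2) := by rw [hA2]
      _ = |D - μ ^ 2| / μ := Real.sqrt_sq h3
  refine ⟨hDne, hGne, hGval, hnorm, ?_, ?_⟩
  · rw [← hGval]; exact hGpos
  · rw [← hGval, ← sq_abs]
    exact pow_le_one₀ (abs_nonneg G) hCS
end
end
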